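/- arXiv:1301.0237 — 2 statements merged into one kernel-verified Lean document; each statement's English description precedes it below -/
import Mathlib

section
/- For every λ > 0 and every integer j ≥ 0, one has 2 ∫_0^1 r J_j(λr)² dr = (4/λ²) Σ_{p=0}^∞ (j + 1 + 2p) J_{j+1+2p}(λ)². Equivalently, the squared norm of the Fourier-Bessel function b_{λ,j} on the closed unit disk Ω with respect to the normalized uniform measure ν_0 = dx/π satisfies ‖b_{λ,j}‖²_{L²(ν_0)} = (4/λ²) Σ_{p=0}^∞ (j + 1 + 2p) J_{j+1+2p}(λ)². -/
/-!
Differentiating the power series termwise gives `J_{n+1}' = (J_n - J_{n+2}) / 2`, and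
comparing coefficients gives `2 (n + 1) J_{n+1} = x (J_n + J_{n+2})`; together,
`(2 (n + 1) J_{n+1}(x)²)' = x J_n(x)² - x J_{n+2}(x)²`. Hence
`∫₀ˣ t J_n² - ∫₀ˣ t J_{n+2}² = 2 (n + 1) J_{n+1}(x)²`, and summing over `n, n + 2, n + 4, …`
telescopes: the tail `∫₀ˣ t J_m²` tends to `0` because
`|J_m(t)| ≤ (|x|/2)^m / m! · exp (x²/4)` on `[0, x]`. The substitution `t = λ r` and polar
coordinates, in which `|b_{λ,j}(z)| = |J_j(λ|z|)|` is radial, give the two forms of the statement.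
-/

open MeasureTheory Metric

/-- Bessel function of the first kind of nonnegative integer order. -/
noncomputable def besselJnat (n : ℕ) (x : ℝ) : ℝ :=
  ∑' k : ℕ, ((-1 : ℝ) ^ k / ((Nat.factorial k : ℝ) * (Nat.factorial (n + k) : ℝ))) *
    (x / 2) ^ (n + 2 * k)

/-- Bessel function of the first kind of integer order, with `J_{-n} = (-1)^n J_n`. -/
noncomputable def besselJ (n : ℤ) (x : ℝ) : ℝ :=
  if 0 ≤ n then besselJnat n.toNat x else (-1 : ℝ) ^ n.natAbs * besselJnat n.natAbs x

/-- The Fourier-Bessel function `b_{λ,j}(x) = e^{ijθ} J_j(λ r)` on `ℝ² ≃ ℂ`. -/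
noncomputable def fourierBessel (lam : ℝ) (j : ℤ) (z : ℂ) : ℂ :=
  Complex.exp (Complex.I * j * z.arg) * besselJ j (lam * ‖z‖)

/-- Normalized uniform measure `dx/π` on the closed unit disk. -/
noncomputable def unifDisk : Measure ℂ :=
  (ENNReal.ofReal Real.pi)⁻¹ • (volume.restrict (closedBall (0 : ℂ) 1))

/-- Normalized arc-length measure `dσ/(2π)` on the unit circle. -/
noncomputable def circleUnif : Measure ℂ :=
  (ENNReal.ofReal (2 * Real.pi))⁻¹ •
    Measure.map (fun θ : ℝ => Complex.exp (θ * Complex.I))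
      (volume.restrict (Set.Ioc (0 : ℝ) (2 * Real.pi)))

/-- The mixed measure `ν_α = (1-α) dx/π + α dσ/(2π)`. -/
noncomputable def nuAlpha (a : ℝ) : Measure ℂ :=
  ENNReal.ofReal (1 - a) • unifDisk + ENNReal.ofReal a • circleUnif

/-- Squared `L²(ν)` norm of a function. -/
noncomputable def l2normSq (ν : Measure ℂ) (f : ℂ → ℂ) : ℝ :=
  ∫ z, ‖f z‖ ^ 2 ∂ν

/-- A measure on `ℂ` invariant under every rotation about the origin. -/
def RotationInvariant (ν : Measure ℂ) : Prop :=
  ∀ θ : ℝ, Measure.map (fun z : ℂ => Complex.exp (θ * Complex.I) * z) ν = ν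

/-- Plane wave `e^{i k·x}` with wave vector `k = λ(cos φ, sin φ)`. -/
noncomputable def planeWaveFn (lam phi : ℝ) (z : ℂ) : ℂ :=
  Complex.exp (Complex.I * ((lam * (Real.cos phi * z.re + Real.sin phi * z.im) : ℝ) : ℂ))

/-- Angle `φ_l = 2πl/(2m+1)`. -/
noncomputable def phiAngle (m : ℕ) (l : ℤ) : ℝ := 2 * Real.pi * l / (2 * m + 1)

/-- Discretized plane-wave combination
`b_j^m = (1/((2m+1) i^j)) Σ_{l=-m}^m e^{ijφ_l} e_{k_l}`. -/
noncomputable def pwave (lam : ℝ) (m : ℕ) (j : ℤ) (z : ℂ) : ℂ :=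
  (1 / (((2 * m + 1 : ℕ) : ℂ) * Complex.I ^ j)) *
    ∑ l ∈ Finset.Icc (-(m : ℤ)) (m : ℤ),
      Complex.exp (Complex.I * j * ((phiAngle m l : ℝ) : ℂ)) * planeWaveFn lam (phiAngle m l) z

/-- The quantity `K(V_m^b, ν)` for the Fourier-Bessel space on the unit disk. -/
noncomputable def Kb (lam : ℝ) (ν : Measure ℂ) (m : ℕ) : ℝ :=
  ⨆ z : closedBall (0 : ℂ) 1,
    ∑ j ∈ Finset.Icc (-(m : ℤ)) (m : ℤ),
      ‖fourierBessel lam j ↑z‖ ^ 2 / l2normSq ν (fourierBessel lam j)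

/-- The quantity `K(V_m^e, ν)` for the plane-wave space on the unit disk. -/
noncomputable def Ke (lam : ℝ) (ν : Measure ℂ) (m : ℕ) : ℝ :=
  ⨆ z : closedBall (0 : ℂ) 1,
    ∑ j ∈ Finset.Icc (-(m : ℤ)) (m : ℤ),
      ‖pwave lam m j ↑z‖ ^ 2 / l2normSq ν (pwave lam m j)

/-- Laplacian of a function on `ℝ² ≃ ℂ`. -/
noncomputable def laplacian2 (u : ℂ → ℂ) (z : ℂ) : ℂ :=
  fderiv ℝ (fun w => fderiv ℝ u w 1) z 1 + fderiv ℝ (fun w => fderiv ℝ u w Complex.I) z Complex.I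

open Real Filter Topology
open scoped Nat

noncomputable def besselCoeff (n k : ℕ) : ℝ := (-1) ^ k / (k ! * (n + k) !)

lemma besselCoeff_eq_mul_besselCoeff_succ (n k : ℕ) :
    besselCoeff n k = (n + k + 1) * besselCoeff (n + 1) k := by
  rw [besselCoeff, besselCoeff, show n + 1 + k = n + k + 1 by ring, Nat.factorial_succ]
  push_cast
  field_simp

lemma besselCoeff_add_two (n k : ℕ) :
    besselCoeff (n + 2) k = -((k + 1) * besselCoeff (n + 1) (k + 1)) := by
  rw [besselCoeff, besselCoeff, show n + 1 + (k + 1) = n + 2 + k by ring, Nat.factorial_succ k]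
  push_cast
  field_simp
  ring

lemma abs_besselCoeff_le (n k : ℕ) : |besselCoeff n k| ≤ 1 / (n ! * k !) := by
  rw [besselCoeff, abs_div, abs_pow, abs_neg, abs_one, one_pow, abs_of_pos (by positivity)]
  refine one_div_le_one_div_of_le (by positivity) ?_
  rw [mul_comm (k ! : ℝ)]
  gcongr
  exact Nat.le_add_right n k

lemma abs_besselCoeff_mul_pow_le (n k : ℕ) {x R : ℝ} (hx : |x| ≤ R) :
    |besselCoeff n k * (x / 2) ^ (n + 2 * k)|
      ≤ (R / 2) ^ n / n ! * (((R / 2) ^ 2) ^ k / k !) := by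
  have hpow : |(x / 2) ^ (n + 2 * k)| ≤ (R / 2) ^ n * ((R / 2) ^ 2) ^ k := by
    rw [← pow_mul, ← pow_add, abs_pow, abs_div, abs_two]
    exact pow_le_pow_left₀ (by positivity) (by linarith) _
  calc |besselCoeff n k * (x / 2) ^ (n + 2 * k)|
      ≤ 1 / (n ! * k !) * ((R / 2) ^ n * ((R / 2) ^ 2) ^ k) := by
        rw [abs_mul]
        exact mul_le_mul (abs_besselCoeff_le n k) hpow (abs_nonneg _) (by positivity)
    _ = (R / 2) ^ n / n ! * (((R / 2) ^ 2) ^ k / k !) := by ring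

lemma hasSum_besselJnat_majorant (n : ℕ) (R : ℝ) :
    HasSum (fun k => (R / 2) ^ n / n ! * (((R / 2) ^ 2) ^ k / k !))
      ((R / 2) ^ n / n ! * exp ((R / 2) ^ 2)) := by
  rw [Real.exp_eq_exp_ℝ]
  exact (NormedSpace.expSeries_div_hasSum_exp ((R / 2) ^ 2)).mul_left ((R / 2) ^ n / n !)

lemma hasSum_besselJnat (n : ℕ) (x : ℝ) :
    HasSum (fun k => besselCoeff n k * (x / 2) ^ (n + 2 * k)) (besselJnat n x) :=
  (Summable.of_norm_bounded (hasSum_besselJnat_majorant n |x|).summable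
    fun k => abs_besselCoeff_mul_pow_le n k le_rfl).hasSum

lemma abs_besselJnat_le (n : ℕ) {x R : ℝ} (hx : |x| ≤ R) :
    |besselJnat n x| ≤ (R / 2) ^ n / n ! * exp ((R / 2) ^ 2) :=
  (hasSum_besselJnat n x).norm_le_of_bounded (hasSum_besselJnat_majorant n R)
    fun k => abs_besselCoeff_mul_pow_le n k hx

lemma continuous_besselJnat (n : ℕ) : Continuous (besselJnat n) := by
  refine continuous_iff_continuousAt.2 fun x => ?_
  have hx : x ∈ ball (0 : ℝ) (|x| + 1) := by simp
  refine (continuousOn_tsum (fun k => by fun_prop) (hasSum_besselJnat_majorant n (|x| + 1)).summable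
    fun k y hy => abs_besselCoeff_mul_pow_le n k ?_).continuousAt (isOpen_ball.mem_nhds hx)
  simpa using (mem_ball_zero_iff.1 hy).le

lemma besselJnat_succ_zero (n : ℕ) : besselJnat (n + 1) 0 = 0 := by
  simp [besselJnat]

/-- The coefficient of `(x / 2) ^ (n + 2 * k)` in the power series of `J_{n+2}`. -/
noncomputable def besselCoeffAddTwo (n : ℕ) : ℕ → ℝ
  | 0 => 0
  | k + 1 => besselCoeff (n + 2) k

lemma hasSum_besselJnat_add_two (n : ℕ) (x : ℝ) :
    HasSum (fun k => besselCoeffAddTwo n k * (x / 2) ^ (n + 2 * k)) (besselJnat (n + 2) x) := by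
  rw [← hasSum_nat_add_iff' 1]
  simp only [besselCoeffAddTwo, Finset.sum_range_one, zero_mul, sub_zero]
  refine (hasSum_besselJnat (n + 2) x).congr_fun fun k => ?_
  ring

lemma besselCoeff_add_besselCoeffAddTwo (n k : ℕ) :
    besselCoeff n k + besselCoeffAddTwo n k = (n + 1) * besselCoeff (n + 1) k := by
  cases k with
  | zero => simp [besselCoeffAddTwo, besselCoeff_eq_mul_besselCoeff_succ n 0]
  | succ k =>
    rw [besselCoeffAddTwo, besselCoeff_add_two, besselCoeff_eq_mul_besselCoeff_succ]
    push_cast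
    ring

lemma besselCoeff_sub_besselCoeffAddTwo (n k : ℕ) :
    besselCoeff n k - besselCoeffAddTwo n k = (n + 1 + 2 * k) * besselCoeff (n + 1) k := by
  cases k with
  | zero => simp [besselCoeffAddTwo, besselCoeff_eq_mul_besselCoeff_succ n 0]
  | succ k =>
    rw [besselCoeffAddTwo, besselCoeff_add_two, besselCoeff_eq_mul_besselCoeff_succ]
    push_cast
    ring

theorem mul_besselJnat_add_besselJnat_add_two (n : ℕ) (x : ℝ) :
    x * (besselJnat n x + besselJnat (n + 2) x) = 2 * (n + 1) * besselJnat (n + 1) x := by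
  refine (((hasSum_besselJnat n x).add (hasSum_besselJnat_add_two n x)).mul_left x).unique ?_
  refine ((hasSum_besselJnat (n + 1) x).mul_left (2 * (n + 1) : ℝ)).congr_fun fun k => ?_
  linear_combination (x * (x / 2) ^ (n + 2 * k)) * besselCoeff_add_besselCoeffAddTwo n k

theorem hasDerivAt_besselJnat_succ (n : ℕ) (x : ℝ) :
    HasDerivAt (besselJnat (n + 1)) ((besselJnat n x - besselJnat (n + 2) x) / 2) x := by
  set R := |x| + 1
  have hterm (k : ℕ) (y : ℝ) :
      HasDerivAt (fun y => besselCoeff (n + 1) k * (y / 2) ^ (n + 1 + 2 * k))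
      ((n + 1 + 2 * k) / 2 * besselCoeff (n + 1) k * (y / 2) ^ (n + 2 * k)) y := by
    refine ((((hasDerivAt_id y).div_const 2).pow (n + 1 + 2 * k)).const_mul
      (besselCoeff (n + 1) k)).congr_deriv ?_
    rw [id, show n + 1 + 2 * k - 1 = n + 2 * k by omega]
    push_cast
    ring
  have hbound (k : ℕ) (y : ℝ) (hy : y ∈ ball 0 R) :
      ‖(n + 1 + 2 * k) / 2 * besselCoeff (n + 1) k * (y / 2) ^ (n + 2 * k)‖
        ≤ (R / 2) ^ n / n ! * (((R / 2) ^ 2) ^ k / k !) := by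
    refine le_trans ?_ (abs_besselCoeff_mul_pow_le n k (mem_ball_zero_iff.1 hy).le)
    calc ‖(n + 1 + 2 * k) / 2 * besselCoeff (n + 1) k * (y / 2) ^ (n + 2 * k)‖
        = (n + 1 + 2 * k) / 2 * |besselCoeff (n + 1) k * (y / 2) ^ (n + 2 * k)| := by
          rw [Real.norm_eq_abs, mul_assoc, abs_mul, abs_of_nonneg (by positivity)]
      _ ≤ (n + k + 1) * |besselCoeff (n + 1) k * (y / 2) ^ (n + 2 * k)| := by
          gcongr
          linarith
      _ = |besselCoeff n k * (y / 2) ^ (n + 2 * k)| := by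
          rw [besselCoeff_eq_mul_besselCoeff_succ n k, mul_assoc, abs_mul (_ + _ + _),
            abs_of_nonneg (by positivity : (0 : ℝ) ≤ n + k + 1)]
  have hsum :
      HasSum (fun k => (n + 1 + 2 * k) / 2 * besselCoeff (n + 1) k * (x / 2) ^ (n + 2 * k))
      ((besselJnat n x - besselJnat (n + 2) x) / 2) := by
    refine (((hasSum_besselJnat n x).sub (hasSum_besselJnat_add_two n x)).div_const 2).congr_fun
      fun k => ?_
    linear_combination (-(x / 2) ^ (n + 2 * k) / 2) * besselCoeff_sub_besselCoeffAddTwo n k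
  rw [← hsum.tsum_eq]
  exact hasDerivAt_tsum_of_isPreconnected (hasSum_besselJnat_majorant n R).summable isOpen_ball
    (convex_ball 0 R).isPreconnected (fun k y _ => hterm k y) hbound (mem_ball_self (by positivity))
    (hasSum_besselJnat (n + 1) 0).summable (by simp [R])

theorem hasDerivAt_two_mul_besselJnat_succ_sq (m : ℕ) (x : ℝ) :
    HasDerivAt (fun t => 2 * (m + 1) * besselJnat (m + 1) t ^ 2)
      (x * besselJnat m x ^ 2 - x * besselJnat (m + 2) x ^ 2) x := by
  refine (((hasDerivAt_besselJnat_succ m x).pow 2).const_mul (2 * (m + 1) : ℝ)).congr_deriv ?_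
  norm_num
  linear_combination
    -(besselJnat m x - besselJnat (m + 2) x) * mul_besselJnat_add_besselJnat_add_two m x

theorem integral_mul_besselJnat_sq_sub (m : ℕ) (x : ℝ) :
    (∫ t in (0)..x, t * besselJnat m t ^ 2) - ∫ t in (0)..x, t * besselJnat (m + 2) t ^ 2
      = 2 * (m + 1) * besselJnat (m + 1) x ^ 2 := by
  have hcont (n : ℕ) : Continuous fun t => t * besselJnat n t ^ 2 := by
    have := continuous_besselJnat n
    fun_prop
  rw [← intervalIntegral.integral_sub ((hcont m).intervalIntegrable _ _)
      ((hcont (m + 2)).intervalIntegrable _ _),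
    intervalIntegral.integral_eq_sub_of_hasDerivAt
      (fun t _ => hasDerivAt_two_mul_besselJnat_succ_sq m t)
      (((hcont m).sub (hcont (m + 2))).intervalIntegrable _ _), besselJnat_succ_zero]
  ring

theorem tendsto_integral_mul_besselJnat_sq (x : ℝ) :
    Tendsto (fun m => ∫ t in (0)..x, t * besselJnat m t ^ 2) atTop (𝓝 0) := by
  set c := |x| / 2
  have hbound (m : ℕ) : ‖∫ t in (0)..x, t * besselJnat m t ^ 2‖
      ≤ |x| * (c ^ m / m ! * exp (c ^ 2)) ^ 2 * |x - 0| := by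
    refine intervalIntegral.norm_integral_le_of_norm_le_const fun t ht => ?_
    have htx : |t| ≤ |x| := by
      simpa using Set.abs_sub_left_of_mem_uIcc (Set.uIoc_subset_uIcc ht)
    rw [norm_mul, norm_pow, Real.norm_eq_abs, Real.norm_eq_abs]
    gcongr
    exact abs_besselJnat_le m htx
  have hlim :
      Tendsto (fun m : ℕ => |x| * (c ^ m / m ! * exp (c ^ 2)) ^ 2 * |x - 0|) atTop (𝓝 0) := by
    simpa using ((((FloorSemiring.tendsto_pow_div_factorial_atTop c).mul_const
      (exp (c ^ 2))).pow 2).const_mul |x|).mul_const |x - 0|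
  exact squeeze_zero_norm hbound hlim

theorem hasSum_two_mul_besselJnat_sq (n : ℕ) (x : ℝ) :
    HasSum (fun p : ℕ => 2 * ((n + 1 + 2 * p) * besselJnat (n + 1 + 2 * p) x ^ 2))
      (∫ t in (0)..x, t * besselJnat n t ^ 2) := by
  set I : ℕ → ℝ := fun m => ∫ t in (0)..x, t * besselJnat m t ^ 2
  have hpartial (N : ℕ) :
      ∑ p ∈ Finset.range N, 2 * ((n + 1 + 2 * p) * besselJnat (n + 1 + 2 * p) x ^ 2)
        = I n - I (n + 2 * N) := by
    rw [show I n = I (n + 2 * 0) from rfl, ← Finset.sum_range_sub' (fun p => I (n + 2 * p))]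
    refine Finset.sum_congr rfl fun p _ => ?_
    rw [show n + 2 * (p + 1) = n + 2 * p + 2 by ring, integral_mul_besselJnat_sq_sub,
      show n + 2 * p + 1 = n + 1 + 2 * p by ring]
    push_cast
    ring
  refine (hasSum_iff_tendsto_nat_of_nonneg (fun p => by positivity) _).2 ?_
  simp_rw [hpartial]
  have hI : Tendsto (fun N : ℕ => I (n + 2 * N)) atTop (𝓝 0) :=
    (tendsto_integral_mul_besselJnat_sq x).comp
      (tendsto_atTop_mono (fun N => show N ≤ n + 2 * N by omega) tendsto_id)
  simpa using tendsto_const_nhds.sub hI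

theorem intervalIntegral_mul_comp_mul_left (f : ℝ → ℝ) {c : ℝ} (hc : c ≠ 0) :
    ∫ r in (0)..1, r * f (c * r) = (∫ t in (0)..c, t * f t) / c ^ 2 := by
  calc ∫ r in (0)..1, r * f (c * r) = ∫ r in (0)..1, c⁻¹ * ((c * r) * f (c * r)) := by
        congr 1
        funext r
        field_simp
    _ = (∫ t in (0)..c, t * f t) / c ^ 2 := by
        rw [intervalIntegral.integral_const_mul,
          intervalIntegral.integral_comp_mul_left (fun t => t * f t) hc, mul_zero, mul_one,
          smul_eq_mul]
        field_simp

theorem integral_closedBall_comp_norm (f : ℝ → ℝ) {R : ℝ} (hR : 0 ≤ R) :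
    ∫ z in closedBall (0 : ℂ) R, f ‖z‖ = 2 * π * ∫ r in (0)..R, r * f r := by
  have hind : (closedBall (0 : ℂ) R).indicator (fun z => f ‖z‖)
      = fun z => (Set.Iic R).indicator f ‖z‖ := by
    funext z
    simp [Set.indicator]
  have hradial : (fun y : ℝ => y ^ (2 - 1) • (Set.Iic R).indicator f y)
      = (Set.Iic R).indicator fun y => y * f y := by
    funext y
    simp [Set.indicator]
  rw [← integral_indicator measurableSet_closedBall, hind,
    integral_fun_norm_addHaar volume ((Set.Iic R).indicator f), Complex.finrank_real_complex,
    hradial, setIntegral_indicator measurableSet_Iic, Set.Ioi_inter_Iic,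
    intervalIntegral.integral_of_le hR, measureReal_def, Complex.volume_ball]
  simp
  ring

lemma besselJ_natCast (n : ℕ) (x : ℝ) : besselJ n x = besselJnat n x := by
  rw [besselJ, if_pos (Int.natCast_nonneg n), Int.toNat_natCast]

lemma norm_fourierBessel (lam : ℝ) (j : ℤ) (z : ℂ) :
    ‖fourierBessel lam j z‖ = |besselJ j (lam * ‖z‖)| := by
  rw [fourierBessel, norm_mul, show Complex.I * j * z.arg = ((j * z.arg : ℝ) : ℂ) * Complex.I by
    push_cast; ring, Complex.norm_exp_ofReal_mul_I, one_mul, Complex.norm_real, Real.norm_eq_abs]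

theorem l2normSq_unifDisk_fourierBessel (lam : ℝ) (j : ℤ) :
    l2normSq unifDisk (fourierBessel lam j) = 2 * ∫ r in (0)..1, r * besselJ j (lam * r) ^ 2 := by
  simp_rw [l2normSq, unifDisk, integral_smul_measure, norm_fourierBessel, sq_abs,
    integral_closedBall_comp_norm (fun r => besselJ j (lam * r) ^ 2) zero_le_one]
  rw [ENNReal.toReal_inv, ENNReal.toReal_ofReal pi_pos.le, smul_eq_mul]
  generalize ∫ r in (0)..1, r * besselJ j (lam * r) ^ 2 = I
  field_simp

/-- `2 ∫_0^1 r J_j(λr)² dr = (4/λ²) Σ_{p≥0} (j+1+2p) J_{j+1+2p}(λ)²`,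
i.e. the squared `L²(ν₀)`-norm of `b_{λ,j}` on the unit disk equals this series. -/
theorem stmt_4 (lam : ℝ) (hlam : 0 < lam) (j : ℕ) :
    (2 * ∫ r in (0:ℝ)..1, r * (besselJ (j : ℤ) (lam * r)) ^ 2 =
      (4 / lam ^ 2) * ∑' p : ℕ, ((j : ℝ) + 1 + 2 * p) *
        (besselJ ((j : ℤ) + 1 + 2 * (p : ℤ)) lam) ^ 2) ∧
    l2normSq unifDisk (fourierBessel lam (j : ℤ)) =
      (4 / lam ^ 2) * ∑' p : ℕ, ((j : ℝ) + 1 + 2 * p) *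
        (besselJ ((j : ℤ) + 1 + 2 * (p : ℤ)) lam) ^ 2 := by
  have hseries :
      ∑' p : ℕ, ((j : ℝ) + 1 + 2 * p) * besselJ ((j : ℤ) + 1 + 2 * (p : ℤ)) lam ^ 2
        = (∫ t in (0)..lam, t * besselJnat j t ^ 2) / 2 := by
    have hindex (p : ℕ) : (j : ℤ) + 1 + 2 * (p : ℤ) = ((j + 1 + 2 * p : ℕ) : ℤ) := by
      push_cast
      ring
    simp_rw [hindex, besselJ_natCast]
    rw [← (hasSum_two_mul_besselJnat_sq j lam).tsum_eq, tsum_mul_left]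
    ring
  rw [hseries, l2normSq_unifDisk_fourierBessel, and_self]
  simp_rw [besselJ_natCast]
  rw [intervalIntegral_mul_comp_mul_left (fun t => besselJnat j t ^ 2) hlam.ne']
  ring
end

section
/- Let Ω be the closed unit disk in ℝ², let λ > 0, let m ≥ 0 be an integer, and let ν be any finite rotation-invariant Borel measure on Ω (in particular any ν_α, 0 ≤ α ≤ 1). Then the functions b_j^m(x) := (1/((2m+1) i^j)) Σ_{l=−m}^{m} e^{ijφ_l} e^{i k_l · x}, for j = −m, …, m (with φ_l := 2πl/(2m+1), k_l := λ(cos φ_l, sin φ_l)), are pairwise orthogonal in L²(Ω, ν): ∫_Ω b_j^m \overline{b_k^m} dν = 0 for j ≠ k, and they span the same space as the 2m+1 plane waves e_{k_l}, l = −m, …, m. -/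
open MeasureTheory Metric

/-!
Rotation by `φ₁ = 2π/(2m+1)` maps each wave vector `k_l` to `k_{l-1}`, so it permutes the plane
waves cyclically and multiplies `b_j^m` by `ζ^j`, where `ζ = e^{iφ₁}` is a primitive `(2m+1)`-th
root of unity. For rotation-invariant `ν` the inner product of `b_j^m` and `b_k^m` is therefore
unchanged when multiplied by `ζ^(j-k) ≠ 1`, so it vanishes. The span statement is discrete Fourier
inversion: `Σ_j ζ^(jd) = 0` unless `2m+1 ∣ d`, so the matrix `(ζ^(jl))` is invertible.
-/

open Finset Complex ComplexConjugate

section PeriodicSum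

variable {M : Type*} [AddCommMonoid M] {f : ℤ → M} {N : ℕ}

theorem Function.Periodic.sum_Ico_add_one (hf : Function.Periodic f N) (a : ℤ) :
    ∑ l ∈ Ico (a + 1) (a + 1 + N), f l = ∑ l ∈ Ico a (a + N), f l := by
  rcases N.eq_zero_or_pos with rfl | hN
  · simp
  have h_top : a + 1 + N = a + N + 1 := by ring
  rw [h_top, ← insert_Ico_right_eq_Ico_add_one (by omega), sum_insert (by simp),
    ← insert_Ico_add_one_left_eq_Ico (show a < a + N by omega), sum_insert (by simp), hf a,
    add_comm]

theorem Function.Periodic.sum_Ico_comp_sub_one (hf : Function.Periodic f N) (a : ℤ) :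
    ∑ l ∈ Ico a (a + N), f (l - 1) = ∑ l ∈ Ico a (a + N), f l := by
  have h_shift := sum_Ico_add' f a (a + N) (-1)
  simp only [← sub_eq_add_neg] at h_shift
  rw [h_shift, add_sub_right_comm, ← hf.sum_Ico_add_one (a - 1), sub_add_cancel]

end PeriodicSum

theorem sum_zpow_Ico_eq_zero {K : Type*} [Field K] {ω : K} {N : ℕ} (hω : ω ^ N = 1)
    (hω1 : ω ≠ 1) (a : ℤ) : ∑ l ∈ Ico a (a + N), ω ^ l = 0 := by
  rcases N.eq_zero_or_pos with rfl | hN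
  · simp
  have hω0 : ω ≠ 0 := by rintro rfl; simp [hN.ne'] at hω
  have hper : Function.Periodic (fun l : ℤ => ω ^ l) N := fun l => by
    simp [zpow_add₀ hω0, hω]
  have hshift := hper.sum_Ico_comp_sub_one a
  simp only [zpow_sub_one₀ hω0, ← sum_mul] at hshift
  by_contra hS
  exact inv_ne_one.mpr hω1 ((mul_eq_left₀ hS).mp hshift)

theorem Submodule.span_image_le_of_eq_sum {R M ι κ : Type*} [Semiring R] [AddCommMonoid M]
    [Module R M] {v : ι → M} {w : κ → M} {s : Set ι} {t : Finset κ} (c : ι → κ → R)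
    (h : ∀ i ∈ s, v i = ∑ k ∈ t, c i k • w k) : span R (v '' s) ≤ span R (w '' t) := by
  rw [Submodule.span_le]
  rintro _ ⟨i, hi, rfl⟩
  rw [h i hi]
  exact sum_mem fun k hk => smul_mem _ _ (subset_span ⟨k, hk, rfl⟩)

theorem integral_eq_zero_of_comp_eq_mul {α 𝕜 : Type*} [MeasurableSpace α] [RCLike 𝕜]
    {μ : Measure α} {T : α → α} (hT : MeasurePreserving T μ μ) (hTe : MeasurableEmbedding T)
    {f : α → 𝕜} {c : 𝕜} (hc : c ≠ 1) (hf : ∀ x, f (T x) = c * f x) : ∫ x, f x ∂μ = 0 := by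
  have h := hT.integral_comp hTe f
  simp only [hf, integral_const_mul] at h
  by_contra h0
  exact hc ((mul_eq_right₀ h0).mp h)

theorem RotationInvariant.measurePreserving {ν : Measure ℂ} (h : RotationInvariant ν) (θ : ℝ) :
    MeasurePreserving (fun z => exp (θ * I) * z) ν ν :=
  ⟨by fun_prop, h θ⟩

theorem Icc_neg_eq_Ico (m : ℕ) :
    Icc (-(m : ℤ)) m = Ico (-(m : ℤ)) (-(m : ℤ) + ((2 * m + 1 : ℕ) : ℤ)) := by
  ext; simp only [mem_Icc, mem_Ico]; omega

theorem eq_of_dvd_sub_of_abs_le {m : ℕ} {j k : ℤ} (hj : |j| ≤ m) (hk : |k| ≤ m)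
    (h : ((2 * m + 1 : ℕ) : ℤ) ∣ j - k) : j = k := by
  refine sub_eq_zero.mp (Int.eq_zero_of_abs_lt_dvd h ?_)
  rw [abs_le] at hj hk
  rw [abs_lt]
  omega

noncomputable def phiRoot (m : ℕ) : ℂ := exp (phiAngle m 1 * I)

theorem phiAngle_eq_mul (m : ℕ) (l : ℤ) : phiAngle m l = l * phiAngle m 1 := by
  unfold phiAngle; ring

theorem phiAngle_add_period (m : ℕ) (l : ℤ) :
    phiAngle m (l + ((2 * m + 1 : ℕ) : ℤ)) = phiAngle m l + 2 * Real.pi := by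
  unfold phiAngle
  field_simp
  push_cast
  ring

theorem isPrimitiveRoot_phiRoot (m : ℕ) : IsPrimitiveRoot (phiRoot m) (2 * m + 1) := by
  convert isPrimitiveRoot_exp (2 * m + 1) (by omega) using 2
  rw [phiRoot, phiAngle]
  push_cast
  ring_nf

theorem phiRoot_ne_zero (m : ℕ) : phiRoot m ≠ 0 := exp_ne_zero _

theorem conj_phiRoot (m : ℕ) : conj (phiRoot m) = (phiRoot m)⁻¹ := by
  rw [phiRoot, ← exp_conj, ← exp_neg, map_mul, conj_ofReal, conj_I, mul_neg]

theorem exp_I_mul_mul_phiAngle (m : ℕ) (j l : ℤ) :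
    exp (I * j * phiAngle m l) = phiRoot m ^ (j * l) := by
  rw [phiRoot, ← exp_int_mul, phiAngle_eq_mul]
  push_cast
  ring_nf

theorem planeWaveFn_rotate (lam θ φ : ℝ) (z : ℂ) :
    planeWaveFn lam φ (exp (θ * I) * z) = planeWaveFn lam (φ - θ) z := by
  simp only [planeWaveFn, exp_mul_I, mul_re, mul_im, add_re, add_im, I_re, I_im,
    cos_ofReal_re, cos_ofReal_im, sin_ofReal_re, sin_ofReal_im, Real.cos_sub, Real.sin_sub]
  ring_nf

theorem planeWaveFn_add_two_pi (lam φ : ℝ) :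
    planeWaveFn lam (φ + 2 * Real.pi) = planeWaveFn lam φ := by
  ext z
  simp only [planeWaveFn, Real.cos_add_two_pi, Real.sin_add_two_pi]

theorem pwave_apply (lam : ℝ) (m : ℕ) (j : ℤ) (z : ℂ) :
    pwave lam m j z = (((2 * m + 1 : ℕ) : ℂ) * I ^ j)⁻¹ *
      ∑ l ∈ Icc (-(m : ℤ)) m, phiRoot m ^ (j * l) * planeWaveFn lam (phiAngle m l) z := by
  simp only [pwave, one_div, exp_I_mul_mul_phiAngle]

theorem pwave_eq_sum (lam : ℝ) (m : ℕ) (j : ℤ) :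
    pwave lam m j = ∑ l ∈ Icc (-(m : ℤ)) m,
      ((((2 * m + 1 : ℕ) : ℂ) * I ^ j)⁻¹ * phiRoot m ^ (j * l)) •
        planeWaveFn lam (phiAngle m l) := by
  ext z
  simp only [pwave_apply, Finset.sum_apply, Pi.smul_apply, smul_eq_mul, mul_sum, mul_assoc]

theorem pwave_phiRoot_mul (lam : ℝ) (m : ℕ) (j : ℤ) (z : ℂ) :
    pwave lam m j (phiRoot m * z) = phiRoot m ^ j * pwave lam m j z := by
  rw [pwave_apply, pwave_apply]
  set ζ := phiRoot m
  have hζ0 : ζ ≠ 0 := phiRoot_ne_zero m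
  set F : ℤ → ℂ := fun l => ζ ^ (j * l) * planeWaveFn lam (phiAngle m l) z
  have hF : Function.Periodic F ((2 * m + 1 : ℕ) : ℤ) := fun l => by
    have hζN : ζ ^ (j * ((2 * m + 1 : ℕ) : ℤ)) = 1 :=
      ((isPrimitiveRoot_phiRoot m).zpow_eq_one_iff_dvd _).mpr (dvd_mul_left _ _)
    simp only [F, mul_add, zpow_add₀ hζ0, hζN, mul_one, phiAngle_add_period,
      planeWaveFn_add_two_pi]
  have h_summand : ∀ l : ℤ,
      ζ ^ (j * l) * planeWaveFn lam (phiAngle m l) (ζ * z) = ζ ^ j * F (l - 1) := fun l => by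
    have h_rotate : planeWaveFn lam (phiAngle m l) (ζ * z) =
        planeWaveFn lam (phiAngle m (l - 1)) z := by
      have hφ : phiAngle m l - phiAngle m 1 = phiAngle m (l - 1) := by
        simp only [phiAngle]; push_cast; ring
      exact (planeWaveFn_rotate lam _ _ z).trans (by rw [hφ])
    rw [h_rotate, ← mul_assoc, ← zpow_add₀ hζ0]
    ring_nf
  simp only [h_summand, ← mul_sum, Icc_neg_eq_Ico, hF.sum_Ico_comp_sub_one]
  ring

theorem integral_pwave_mul_conj_eq_zero (lam : ℝ) {m : ℕ} {ν : Measure ℂ}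
    (hrot : RotationInvariant ν) {j k : ℤ} (hj : |j| ≤ m) (hk : |k| ≤ m) (hjk : j ≠ k) :
    ∫ z, pwave lam m j z * conj (pwave lam m k z) ∂ν = 0 := by
  have hζ0 := phiRoot_ne_zero m
  refine integral_eq_zero_of_comp_eq_mul (hrot.measurePreserving (phiAngle m 1))
    (measurableEmbedding_mulLeft₀ hζ0) (c := phiRoot m ^ (j - k)) ?_ fun z => ?_
  · rw [Ne, (isPrimitiveRoot_phiRoot m).zpow_eq_one_iff_dvd]
    exact fun hdvd => hjk (eq_of_dvd_sub_of_abs_le hj hk hdvd)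
  · change pwave lam m j (phiRoot m * z) * conj (pwave lam m k (phiRoot m * z)) = _
    rw [pwave_phiRoot_mul, pwave_phiRoot_mul, map_mul, map_zpow₀, conj_phiRoot, inv_zpow',
      zpow_sub₀ hζ0, div_eq_mul_inv, ← zpow_neg]
    ring

theorem sum_phiRoot_zpow_mul (m : ℕ) (d : ℤ) :
    ∑ j ∈ Icc (-(m : ℤ)) m, phiRoot m ^ (j * d) =
      if ((2 * m + 1 : ℕ) : ℤ) ∣ d then ((2 * m + 1 : ℕ) : ℂ) else 0 := by
  have hζ := isPrimitiveRoot_phiRoot m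
  simp_rw [mul_comm _ d, zpow_mul]
  split_ifs with hd
  · rw [(hζ.zpow_eq_one_iff_dvd d).mpr hd]
    simp only [one_zpow, sum_const, Int.card_Icc, nsmul_eq_mul, mul_one]
    congr 1
    omega
  · rw [Icc_neg_eq_Ico]
    refine sum_zpow_Ico_eq_zero ?_ (mt (hζ.zpow_eq_one_iff_dvd d).mp hd) _
    rw [← zpow_natCast, ← zpow_mul, mul_comm, zpow_mul, zpow_natCast, hζ.pow_eq_one, one_zpow]

theorem planeWaveFn_phiAngle_eq_sum_pwave (lam : ℝ) {m : ℕ} {l' : ℤ}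
    (hl' : l' ∈ Icc (-(m : ℤ)) m) :
    planeWaveFn lam (phiAngle m l') = ∑ j ∈ Icc (-(m : ℤ)) m,
      (I ^ j * (phiRoot m ^ (j * l'))⁻¹) • pwave lam m j := by
  ext z
  set N : ℂ := ((2 * m + 1 : ℕ) : ℂ)
  have hN : N ≠ 0 := Nat.cast_ne_zero.mpr (by omega)
  have hζ0 := phiRoot_ne_zero m
  have h_dft : ∀ l ∈ Icc (-(m : ℤ)) m,
      ∑ j ∈ Icc (-(m : ℤ)) m, phiRoot m ^ (j * (l - l')) = if l = l' then N else 0 := by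
    intro l hl
    have habs : ∀ x ∈ Icc (-(m : ℤ)) m, |x| ≤ m := fun x hx => abs_le.mpr (mem_Icc.mp hx)
    have h_dvd_iff : ((2 * m + 1 : ℕ) : ℤ) ∣ l - l' ↔ l = l' :=
      ⟨eq_of_dvd_sub_of_abs_le (habs l hl) (habs l' hl'), fun h => by simp [h]⟩
    simp only [sum_phiRoot_zpow_mul, h_dvd_iff, N]
  rw [Finset.sum_apply]
  simp only [Pi.smul_apply, smul_eq_mul]
  symm
  calc ∑ j ∈ Icc (-(m : ℤ)) m, (I ^ j * (phiRoot m ^ (j * l'))⁻¹) * pwave lam m j z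
      = ∑ j ∈ Icc (-(m : ℤ)) m, N⁻¹ * ∑ l ∈ Icc (-(m : ℤ)) m,
          phiRoot m ^ (j * (l - l')) * planeWaveFn lam (phiAngle m l) z := by
        refine sum_congr rfl fun j _ => ?_
        simp only [pwave_apply, mul_sum, mul_sub, zpow_sub₀ hζ0]
        refine sum_congr rfl fun l _ => ?_
        field_simp
        exact mul_div_cancel_right₀ _ hN
    _ = N⁻¹ * ∑ l ∈ Icc (-(m : ℤ)) m, (if l = l' then N else 0) *
          planeWaveFn lam (phiAngle m l) z := by
        rw [← mul_sum, sum_comm]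
        simp only [← sum_mul]
        congr 1
        exact sum_congr rfl fun l hl => by rw [h_dft l hl]
    _ = planeWaveFn lam (phiAngle m l') z := by
        simp [ite_mul, sum_ite_eq', hl', hN]

theorem stmt_13_general (lam : ℝ) (m : ℕ) (ν : Measure ℂ) (hrot : RotationInvariant ν) :
    (∀ j k : ℤ, |j| ≤ (m : ℤ) → |k| ≤ (m : ℤ) → j ≠ k →
      (∫ z, pwave lam m j z * (starRingEnd ℂ) (pwave lam m k z) ∂ν) = 0) ∧
    Submodule.span ℂ ((fun j : ℤ => pwave lam m j) '' Set.Icc (-(m : ℤ)) (m : ℤ)) =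
      Submodule.span ℂ
        ((fun l : ℤ => planeWaveFn lam (phiAngle m l)) '' Set.Icc (-(m : ℤ)) (m : ℤ)) := by
  refine ⟨fun j k hj hk hjk => integral_pwave_mul_conj_eq_zero lam hrot hj hk hjk, ?_⟩
  rw [← coe_Icc]
  exact le_antisymm (Submodule.span_image_le_of_eq_sum _ fun j _ => pwave_eq_sum lam m j)
    (Submodule.span_image_le_of_eq_sum _ fun l hl => planeWaveFn_phiAngle_eq_sum_pwave lam hl)

/-- For any finite rotation-invariant Borel measure `ν` on the closed unit
disk (in particular any `ν_α`), the functions `b_j^m`, `j = -m,…,m`, are pairwise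
orthogonal in `L²(Ω,ν)` and span the same space as the `2m+1` plane waves `e_{k_l}`. -/
theorem stmt_13 (lam : ℝ) (hlam : 0 < lam) (m : ℕ)
    (ν : Measure ℂ) [IsFiniteMeasure ν] (hsupp : ν (closedBall (0 : ℂ) 1)ᶜ = 0)
    (hrot : RotationInvariant ν) :
    (∀ j k : ℤ, |j| ≤ (m : ℤ) → |k| ≤ (m : ℤ) → j ≠ k →
      (∫ z, pwave lam m j z * (starRingEnd ℂ) (pwave lam m k z) ∂ν) = 0) ∧
    Submodule.span ℂ ((fun j : ℤ => pwave lam m j) '' Set.Icc (-(m : ℤ)) (m : ℤ)) =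
      Submodule.span ℂ
        ((fun l : ℤ => planeWaveFn lam (phiAngle m l)) '' Set.Icc (-(m : ℤ)) (m : ℤ)) :=
  stmt_13_general lam m ν hrot
end
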